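/- arXiv:2210.08582 — 4 statements merged into one kernel-verified Lean document; each statement's English description precedes it below -/
import Mathlib

section
/- A functor f : C → D between small categories is final (cofinal) if and only if the colimit in PSh(D) of the composite C → D → PSh(D) of f with the Yoneda embedding is a terminal presheaf. -/
open CategoryTheory CategoryTheory.Limits

/-- A functor `f : C ⥤ D` between small categories is final if and only if the
colimit in `PSh(D)` of `f ⋙ yoneda` is a terminal presheaf. -/
theorem final_iff_colimit_comp_yoneda_terminal {C D : Type u} [SmallCategory C]
    [SmallCategory D] (f : C ⥤ D) :
    f.Final ↔ Nonempty (IsTerminal (colimit (f ⋙ yoneda : C ⥤ Dᵒᵖ ⥤ Type u))) := by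
  constructor
  · intro hF
    refine ⟨evaluationJointlyReflectsLimits (asEmptyCone (colimit (f ⋙ yoneda : C ⥤ Dᵒᵖ ⥤ Type u))) fun d => ?_⟩
    have ht : IsTerminal ((colimit (f ⋙ yoneda : C ⥤ Dᵒᵖ ⥤ Type u)).obj d) := by
      refine (Types.isTerminalEquivIsoPUnit _).symm ?_
      exact preservesColimitIso ((evaluation Dᵒᵖ (Type u)).obj d) (f ⋙ yoneda) ≪≫
        Functor.Final.colimitCompCoyonedaIso f d.unop
    exact isLimitChangeEmptyCone _ ht _ (Iso.refl _)
  · rintro ⟨h⟩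
    exact Functor.final_of_isTerminal_colimit_comp_yoneda f h
end

section
/- Path-category criterion for colimit preservation: let J be a small category and f : A → B a functor between categories having colimits of shape J. Let LPath(f) be the comma category Comma(id_B, f) and Path(f) ⊆ LPath(f) its full subcategory of objects (b, a, γ) with γ an isomorphism. Then f preserves all colimits of shape J if and only if Path(f) is closed in LPath(f) under colimits of shape J. -/
open CategoryTheory CategoryTheory.Limits

namespace CategoryTheory.Limits

/-- We say that a property is closed under colimits of shape `J` if whenever all objects in a
    `J`-shaped diagram have the property, any colimit of this diagram also has the property. -/
def ClosedUnderColimitsOfShape.{u, v, w, w'} {C : Type u} [Category.{v} C] (J : Type w)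
    [Category.{w'} J] (P : C → Prop) : Prop :=
  ∀ ⦃F : J ⥤ C⦄ ⦃c : Cocone F⦄ (_hc : IsColimit c), (∀ j, P (F.obj j)) → P c.pt

end CategoryTheory.Limits

/-!
Colimits in `Comma L R` are computed componentwise when `L` preserves them. For a diagram of
objects `(b_j, a_j, γ_j)` the structure morphism of the colimit is the comparison map
`colim L b_j → R (colim a_j)`, which factors as `colim L b_j → colim R a_j → R (colim a_j)`;
the first map is `colim γ_j`, invertible when every `γ_j` is. So on diagrams in `Path(f)` the
colimit stays in `Path(f)` exactly when `f` preserves the colimit of the `a_j`, and every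
diagram in `A` is the second component of one in `Path(f)`, via `a ↦ (f a, a, 𝟙)`.
-/

namespace CategoryTheory.Comma

variable {A : Type*} [Category A] {B : Type*} [Category B] {T : Type*} [Category T]
  {L : A ⥤ T} {R : B ⥤ T}

theorem isIso_hom_of_iso {x y : Comma L R} (φ : x ≅ y) [IsIso x.hom] : IsIso y.hom := by
  have hy : y.hom = L.map (inv φ.hom.left) ≫ x.hom ≫ R.map φ.hom.right := by simp
  rw [hy]
  infer_instance

theorem isIso_coconeOfPreserves_pt_hom_iff {J : Type*} [Category J] {F : J ⥤ Comma L R}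
    [PreservesColimit (F ⋙ fst L R) L] {c₁ : Cocone (F ⋙ fst L R)} (t₁ : IsColimit c₁)
    (c₂ : Cocone (F ⋙ snd L R)) [∀ j, IsIso (F.obj j).hom] :
    IsIso (coconeOfPreserves F t₁ c₂).pt.hom ↔ Nonempty (IsColimit (R.mapCocone c₂)) := by
  have : ∀ j, IsIso ((Functor.whiskerLeft F (natTrans L R)).app j) := fun j =>
    inferInstanceAs (IsIso (F.obj j).hom)
  have : IsIso (Functor.whiskerLeft F (natTrans L R)) := NatIso.isIso_of_isIso_app _
  exact (isColimitOfPreserves L t₁).nonempty_isColimit_iff_isIso_desc.symm.trans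
    (IsColimit.precomposeHomEquiv (asIso (Functor.whiskerLeft F (natTrans L R))) _).nonempty_congr

def identityPaths (f : A ⥤ B) : A ⥤ Comma (𝟭 B) f where
  obj a := ⟨f.obj a, a, 𝟙 (f.obj a)⟩
  map g := { left := f.map g, right := g }

end CategoryTheory.Comma

/-- Path-category criterion for colimit preservation: for `f : A ⥤ B` between
categories having colimits of shape `J`, the functor `f` preserves colimits of
shape `J` if and only if the full subcategory `Path(f)` of the comma category
`LPath(f) = Comma (𝟭 B) f`, spanned by the objects whose structure morphism is
an isomorphism, is closed under colimits of shape `J`. -/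
theorem preservesColimits_iff_path_closed {A : Type u₁} [Category.{v₁} A]
    {B : Type u₂} [Category.{v₂} B] (f : A ⥤ B)
    {J : Type u₃} [SmallCategory J]
    [HasColimitsOfShape J A] [HasColimitsOfShape J B] :
    Nonempty (PreservesColimitsOfShape J f) ↔
      ClosedUnderColimitsOfShape J (fun x : Comma (𝟭 B) f => IsIso x.hom) := by
  constructor
  · rintro ⟨_⟩ F c hc hF
    let t₁ := colimit.isColimit (F ⋙ Comma.fst _ _)
    let t₂ := colimit.isColimit (F ⋙ Comma.snd _ _)
    have := (Comma.isIso_coconeOfPreserves_pt_hom_iff t₁ _).2 ⟨isColimitOfPreserves f t₂⟩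
    exact Comma.isIso_hom_of_iso
      ((Comma.coconeOfPreservesIsColimit F t₁ t₂).coconePointUniqueUpToIso hc)
  · intro h
    refine ⟨⟨fun {F} => preservesColimit_of_preserves_colimit_cocone (colimit.isColimit F) ?_⟩⟩
    let G := F ⋙ Comma.identityPaths f
    have hG : ∀ j, IsIso (G.obj j).hom := fun j => inferInstanceAs (IsIso (𝟙 _))
    let t₁ := colimit.isColimit (G ⋙ Comma.fst _ _)
    have := h (Comma.coconeOfPreservesIsColimit G t₁ (colimit.isColimit F)) hG
    exact ((Comma.isIso_coconeOfPreserves_pt_hom_iff t₁ (colimit.cocone F)).1 this).some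
end

section
/- A small category J is sifted if and only if taking colimits of shape J in the category of types commutes with finite products, i.e. the colimit functor colim_J : Fun(J, Type) → Type preserves finite products. -/
open CategoryTheory CategoryTheory.Limits

/-- A small category `J` is sifted if and only if the colimit functor
`colim : (J ⥤ Type) ⥤ Type` preserves finite products. -/
theorem isSifted_iff_colim_preservesFiniteProducts {J : Type u} [SmallCategory J] :
    IsSifted J ↔
      Nonempty (PreservesFiniteProducts (colim : (J ⥤ Type u) ⥤ Type u)) :=
  ⟨fun _ => ⟨IsSifted.colim_preservesFiniteProducts_of_isSifted⟩,
    fun ⟨_⟩ => IsSifted.of_colim_preservesFiniteProducts J⟩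
end

section
/- A small category J is filtered if and only if the colimit functor colim_J : Fun(J, Type) → Type preserves finite limits. -/
open CategoryTheory CategoryTheory.Limits

/-- A small category `J` is filtered if and only if the colimit functor
`colim : (J ⥤ Type) ⥤ Type` preserves finite limits. -/
theorem isFiltered_iff_colim_preservesFiniteLimits {J : Type u} [SmallCategory J] :
    IsFiltered J ↔
      Nonempty (PreservesFiniteLimits (colim : (J ⥤ Type u) ⥤ Type u)) := by
  constructor
  · intro _
    exact ⟨inferInstance⟩
  · rintro ⟨P⟩
    apply isFiltered_of_nonempty_limit_colimit_to_colimit_limit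
    intro K _ _ F
    exact ⟨(HasLimit.isoOfNatIso (colimitIsoFlipCompColim F.flip)).hom ≫
      (preservesLimitIso colim F).inv⟩
end
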